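/- Assume Γ(a,b) contains some matrix with support included in Supp(X_0). Then: (i) the series Σ_{n≥0} (R_i(X_{2n}) − 1)² and Σ_{n≥0} (C_j(X_{2n+1}) − 1)² converge for every i and j; (ii) the sequences (√n·(R_i(X_n) − 1))_{n≥0} and (√n·(C_j(X_n) − 1))_{n≥0} converge to 0 for every i and j; in particular R_i(X_n) → 1 and C_j(X_n) → 1 as n → ∞. -/
import Mathlib


open Filter Topology

namespace IPFP

variable {p q : ℕ}

/-- Row sums `X(i,+)`. -/
noncomputable def rowSum (X : Matrix (Fin p) (Fin q) ℝ) (i : Fin p) : ℝ := ∑ j, X i j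

/-- Column sums `X(+,j)`. -/
noncomputable def colSum (X : Matrix (Fin p) (Fin q) ℝ) (j : Fin q) : ℝ := ∑ i, X i j

/-- `R_i(X) = X(i,+)/a_i`. -/
noncomputable def Rrat (a : Fin p → ℝ) (X : Matrix (Fin p) (Fin q) ℝ) (i : Fin p) : ℝ :=
  rowSum X i / a i

/-- `C_j(X) = X(+,j)/b_j`. -/
noncomputable def Crat (b : Fin q → ℝ) (X : Matrix (Fin p) (Fin q) ℝ) (j : Fin q) : ℝ :=
  colSum X j / b j

/-- `T_R(X)(i,j) = X(i,j)/R_i(X)`. -/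
noncomputable def TR (a : Fin p → ℝ) (X : Matrix (Fin p) (Fin q) ℝ) :
    Matrix (Fin p) (Fin q) ℝ :=
  fun i j => X i j / Rrat a X i

/-- `T_C(X)(i,j) = X(i,j)/C_j(X)`. -/
noncomputable def TC (b : Fin q → ℝ) (X : Matrix (Fin p) (Fin q) ℝ) :
    Matrix (Fin p) (Fin q) ℝ :=
  fun i j => X i j / Crat b X j

/-- The IPFP sequence: `X_0 = X0`, `X_{2n+1} = T_R(X_{2n})`, `X_{2n+2} = T_C(X_{2n+1})`. -/
noncomputable def ipfp (a : Fin p → ℝ) (b : Fin q → ℝ) (X0 : Matrix (Fin p) (Fin q) ℝ) :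
    ℕ → Matrix (Fin p) (Fin q) ℝ
  | 0 => X0
  | n + 1 => if Even n then TR a (ipfp a b X0 n) else TC b (ipfp a b X0 n)

/-- Membership in `Γ₀`: nonnegative entries, positive row and column sums. -/
def memGamma0 (X : Matrix (Fin p) (Fin q) ℝ) : Prop :=
  (∀ i j, 0 ≤ X i j) ∧ (∀ i, 0 < rowSum X i) ∧ (∀ j, 0 < colSum X j)

/-- Membership in `Γ₁`: member of `Γ₀` with total sum `1`. -/
def memGamma1 (X : Matrix (Fin p) (Fin q) ℝ) : Prop :=
  memGamma0 X ∧ ∑ i, ∑ j, X i j = 1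

/-- Membership in `Γ(a,b)`: member of `Γ₀` with row marginals `a` and column marginals `b`. -/
def memGamma (a : Fin p → ℝ) (b : Fin q → ℝ) (X : Matrix (Fin p) (Fin q) ℝ) : Prop :=
  memGamma0 X ∧ (∀ i, rowSum X i = a i) ∧ (∀ j, colSum X j = b j)

/-- `Supp(X) ⊆ Supp(Y)`. -/
def suppSubset (X Y : Matrix (Fin p) (Fin q) ℝ) : Prop :=
  ∀ i j, 0 < X i j → 0 < Y i j

/-- Membership in `Γ(a,b,X0)`: member of `Γ(a,b)` with support contained in `Supp(X0)`. -/
def memGammaSub (a : Fin p → ℝ) (b : Fin q → ℝ) (X0 X : Matrix (Fin p) (Fin q) ℝ) : Prop :=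
  memGamma a b X ∧ suppSubset X X0

/-- Relative entropy (I-divergence) `D(Y‖X) = Σ_{(i,j) ∈ Supp X} Y(i,j)·ln(Y(i,j)/X(i,j))`
(finite expression; it agrees with the relative entropy whenever `Supp Y ⊆ Supp X`,
with the convention `0·ln 0 = 0`). -/
noncomputable def relEnt (Y X : Matrix (Fin p) (Fin q) ℝ) : ℝ :=
  ∑ i, ∑ j, if 0 < X i j then Y i j * Real.log (Y i j / X i j) else 0

/-- A real sequence converges to `l` at an at least geometric rate:
it tends to `l` and `limsup_n |x_n − l|^{1/n} < 1`. -/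
noncomputable def geomSeq (x : ℕ → ℝ) (l : ℝ) : Prop :=
  Tendsto x atTop (nhds l) ∧
    Filter.limsup (fun n : ℕ => |x n - l| ^ ((n : ℝ)⁻¹)) atTop < 1

/-- A matrix sequence converges to `L` at an at least geometric rate (using the
`ℓ¹` norm on entries): it tends to `L` and `limsup_n ‖X_n − L‖^{1/n} < 1`. -/
noncomputable def geomMat (X : ℕ → Matrix (Fin p) (Fin q) ℝ)
    (L : Matrix (Fin p) (Fin q) ℝ) : Prop :=
  Tendsto X atTop (nhds L) ∧
    Filter.limsup (fun n : ℕ => (∑ i, ∑ j, |X n i j - L i j|) ^ ((n : ℝ)⁻¹)) atTop < 1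

end IPFP

lemma quad_log_bound {t K : ℝ} (ht : 0 < t) (htK : t ≤ K) (hK : 1 ≤ K) :
    (t - 1) ^ 2 / (4 * K ^ 2) ≤ t - 1 - Real.log t := by
  have hst : Real.sqrt t ^ 2 = t := Real.sq_sqrt ht.le
  have hsp : 0 < Real.sqrt t := Real.sqrt_pos.2 ht
  have hlog : Real.log t ≤ 2 * (Real.sqrt t - 1) := by
    have h1 : Real.log (Real.sqrt t) ≤ Real.sqrt t - 1 := Real.log_le_sub_one_of_pos hsp
    have h2 : Real.log t = 2 * Real.log (Real.sqrt t) := by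
      conv_lhs => rw [← hst, Real.log_pow]
      push_cast; ring
    linarith
  have hsK : Real.sqrt t ≤ K := by
    rcases le_total t 1 with h | h
    · exact (Real.sqrt_le_one.2 h).trans hK
    · nlinarith [hst, hsp]
  have key : (Real.sqrt t - 1) ^ 2 ≤ t - 1 - Real.log t := by nlinarith [hst]
  have hfac : (t - 1) ^ 2 = (Real.sqrt t - 1) ^ 2 * (Real.sqrt t + 1) ^ 2 := by
    have : t - 1 = (Real.sqrt t - 1) * (Real.sqrt t + 1) := by nlinarith [hst]
    rw [this]; ring
  have hb : (Real.sqrt t + 1) ^ 2 ≤ 4 * K ^ 2 := by nlinarith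
  have hK2 : (0:ℝ) < 4 * K ^ 2 := by positivity
  rw [div_le_iff₀ hK2]
  nlinarith [sq_nonneg (Real.sqrt t - 1), sq_nonneg (Real.sqrt t + 1)]



namespace IPFP

variable {p q : ℕ}

section Basics

variable {a : Fin p → ℝ} {b : Fin q → ℝ} {X : Matrix (Fin p) (Fin q) ℝ}

lemma Rrat_pos (ha : 0 < a i) (h : 0 < rowSum X i) : 0 < Rrat a X i := div_pos h ha

lemma Crat_pos (hb : 0 < b j) (h : 0 < colSum X j) : 0 < Crat b X j := div_pos h hb

lemma TR_pos_iff (hR : 0 < Rrat a X i) (hX : 0 ≤ X i j) :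
    (0 < TR a X i j ↔ 0 < X i j) := by
  unfold TR
  constructor
  · intro h
    rcases hX.lt_or_eq with h' | h'
    · exact h'
    · simp [← h'] at h
  · intro h; exact div_pos h hR

lemma rowSum_TR (ha : 0 < a i) (h : 0 < rowSum X i) : rowSum (TR a X) i = a i := by
  unfold rowSum TR Rrat
  rw [← Finset.sum_div]
  field_simp
  unfold rowSum; ring

lemma colSum_TC (hb : 0 < b j) (h : 0 < colSum X j) : colSum (TC b X) j = b j := by
  unfold colSum TC Crat
  rw [← Finset.sum_div]
  field_simp
  unfold colSum; ring

lemma exists_pos_of_colSum (hX : ∀ i j, 0 ≤ X i j) (h : 0 < colSum X j) :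
    ∃ i, 0 < X i j := by
  by_contra hc
  push_neg at hc
  have : colSum X j ≤ 0 := Finset.sum_nonpos fun i _ => hc i
  linarith

lemma exists_pos_of_rowSum (hX : ∀ i j, 0 ≤ X i j) (h : 0 < rowSum X i) :
    ∃ j, 0 < X i j := by
  by_contra hc
  push_neg at hc
  have : rowSum X i ≤ 0 := Finset.sum_nonpos fun j _ => hc j
  linarith

lemma memGamma1_TR (ha : ∀ i, 0 < a i) (hsa : ∑ i, a i = 1) (hX : memGamma1 X) :
    memGamma1 (TR a X) := by
  obtain ⟨⟨hnn, hr, hc⟩, htot⟩ := hX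
  have hRpos : ∀ i, 0 < Rrat a X i := fun i => Rrat_pos (ha i) (hr i)
  have hnn' : ∀ i j, 0 ≤ TR a X i j := fun i j => div_nonneg (hnn i j) (hRpos i).le
  have hrow : ∀ i, rowSum (TR a X) i = a i := fun i => rowSum_TR (ha i) (hr i)
  refine ⟨⟨hnn', fun i => by rw [hrow i]; exact ha i, fun j => ?_⟩, ?_⟩
  · obtain ⟨i, hi⟩ := exists_pos_of_colSum hnn (hc j)
    exact Finset.sum_pos' (fun i _ => hnn' i j)
      ⟨i, Finset.mem_univ i, ((TR_pos_iff (hRpos i) (hnn i j)).2 hi)⟩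
  · calc ∑ i, ∑ j, TR a X i j = ∑ i, a i := Finset.sum_congr rfl fun i _ => hrow i
    _ = 1 := hsa

lemma memGamma1_TC (hb : ∀ j, 0 < b j) (hsb : ∑ j, b j = 1) (hX : memGamma1 X) :
    memGamma1 (TC b X) := by
  obtain ⟨⟨hnn, hr, hc⟩, htot⟩ := hX
  have hCpos : ∀ j, 0 < Crat b X j := fun j => Crat_pos (hb j) (hc j)
  have hnn' : ∀ i j, 0 ≤ TC b X i j := fun i j => div_nonneg (hnn i j) (hCpos j).le
  have hcol : ∀ j, colSum (TC b X) j = b j := fun j => colSum_TC (hb j) (hc j)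
  have hpos_iff : ∀ i j, 0 < TC b X i j ↔ 0 < X i j := by
    intro i j
    unfold TC
    constructor
    · intro h
      rcases (hnn i j).lt_or_eq with h' | h'
      · exact h'
      · simp [← h'] at h
    · intro h; exact div_pos h (hCpos j)
  refine ⟨⟨hnn', fun i => ?_, fun j => by rw [hcol j]; exact hb j⟩, ?_⟩
  · obtain ⟨j, hj⟩ := exists_pos_of_rowSum hnn (hr i)
    exact Finset.sum_pos' (fun j _ => hnn' i j)
      ⟨j, Finset.mem_univ j, (hpos_iff i j).2 hj⟩
  · calc ∑ i, ∑ j, TC b X i j = ∑ j, ∑ i, TC b X i j := Finset.sum_comm ..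
    _ = ∑ j, b j := Finset.sum_congr rfl fun j _ => hcol j
    _ = 1 := hsb

lemma TC_pos_iff (hC : 0 < Crat b X j) (hX : 0 ≤ X i j) :
    (0 < TC b X i j ↔ 0 < X i j) := by
  unfold TC
  constructor
  · intro h
    rcases hX.lt_or_eq with h' | h'
    · exact h'
    · simp [← h'] at h
  · intro h; exact div_pos h hC

end Basics


section Entropy

variable {a : Fin p → ℝ} {b : Fin q → ℝ} {S X : Matrix (Fin p) (Fin q) ℝ}

lemma relEnt_TR (hsupp : ∀ i j, 0 < S i j → 0 < X i j) (hS : ∀ i j, 0 ≤ S i j)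
    (hnn : ∀ i j, 0 ≤ X i j) (hRpos : ∀ i, 0 < Rrat a X i) :
    relEnt S (TR a X) = relEnt S X + ∑ i, rowSum S i * Real.log (Rrat a X i) := by
  unfold relEnt
  rw [← Finset.sum_add_distrib]
  refine Finset.sum_congr rfl fun i _ => ?_
  have : rowSum S i * Real.log (Rrat a X i) = ∑ j, S i j * Real.log (Rrat a X i) := by
    unfold rowSum; rw [Finset.sum_mul]
  rw [this, ← Finset.sum_add_distrib]
  refine Finset.sum_congr rfl fun j _ => ?_
  by_cases hX : 0 < X i j
  · rw [if_pos ((TR_pos_iff (hRpos i) (hnn i j)).2 hX), if_pos hX]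
    rcases (hS i j).lt_or_eq with hSp | hSz
    · have h1 : S i j / TR a X i j = S i j / X i j * Rrat a X i := by
        unfold TR; field_simp
      rw [h1, Real.log_mul (div_pos hSp hX).ne' (hRpos i).ne']
      ring
    · simp [← hSz]
  · have hTR : ¬ 0 < TR a X i j := fun h => hX ((TR_pos_iff (hRpos i) (hnn i j)).1 h)
    have hSz : S i j = 0 := by
      by_contra hc
      exact hX (hsupp i j (lt_of_le_of_ne (hS i j) (Ne.symm hc)))
    rw [if_neg hTR, if_neg hX, hSz]
    ring

lemma relEnt_TC (hsupp : ∀ i j, 0 < S i j → 0 < X i j) (hS : ∀ i j, 0 ≤ S i j)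
    (hnn : ∀ i j, 0 ≤ X i j) (hCpos : ∀ j, 0 < Crat b X j) :
    relEnt S (TC b X) = relEnt S X + ∑ j, colSum S j * Real.log (Crat b X j) := by
  unfold relEnt
  have L : (∑ i, ∑ j, if 0 < TC b X i j then S i j * Real.log (S i j / TC b X i j) else 0)
      = ∑ j, ∑ i, if 0 < TC b X i j then S i j * Real.log (S i j / TC b X i j) else 0 :=
    Finset.sum_comm ..
  have Rr : (∑ i, ∑ j, if 0 < X i j then S i j * Real.log (S i j / X i j) else 0)
      = ∑ j, ∑ i, if 0 < X i j then S i j * Real.log (S i j / X i j) else 0 :=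
    Finset.sum_comm ..
  rw [L, Rr, ← Finset.sum_add_distrib]
  refine Finset.sum_congr rfl fun j _ => ?_
  have : colSum S j * Real.log (Crat b X j) = ∑ i, S i j * Real.log (Crat b X j) := by
    unfold colSum; rw [Finset.sum_mul]
  rw [this, ← Finset.sum_add_distrib]
  refine Finset.sum_congr rfl fun i _ => ?_
  by_cases hX : 0 < X i j
  · rw [if_pos ((TC_pos_iff (hCpos j) (hnn i j)).2 hX), if_pos hX]
    rcases (hS i j).lt_or_eq with hSp | hSz
    · have h1 : S i j / TC b X i j = S i j / X i j * Crat b X j := by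
        unfold TC; field_simp
      rw [h1, Real.log_mul (div_pos hSp hX).ne' (hCpos j).ne']
      ring
    · simp [← hSz]
  · have hTC : ¬ 0 < TC b X i j := fun h => hX ((TC_pos_iff (hCpos j) (hnn i j)).1 h)
    have hSz : S i j = 0 := by
      by_contra hc
      exact hX (hsupp i j (lt_of_le_of_ne (hS i j) (Ne.symm hc)))
    rw [if_neg hTC, if_neg hX, hSz]
    ring

lemma relEnt_nonneg (hsupp : ∀ i j, 0 < S i j → 0 < X i j) (hS : ∀ i j, 0 ≤ S i j)
    (hnn : ∀ i j, 0 ≤ X i j) (hStot : ∑ i, ∑ j, S i j = 1) (hXtot : ∑ i, ∑ j, X i j = 1) :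
    0 ≤ relEnt S X := by
  have key : ∀ i j, S i j - X i j ≤
      (if 0 < X i j then S i j * Real.log (S i j / X i j) else 0) := by
    intro i j
    by_cases hX : 0 < X i j
    · rw [if_pos hX]
      rcases (hS i j).lt_or_eq with hSp | hSz
      · have h1 : Real.log (X i j / S i j) ≤ X i j / S i j - 1 :=
          Real.log_le_sub_one_of_pos (by positivity)
        have h2 : Real.log (S i j / X i j) = - Real.log (X i j / S i j) := by
          rw [← Real.log_inv]; congr 1; field_simp
        have h3 : 1 - X i j / S i j ≤ Real.log (S i j / X i j) := by rw [h2]; linarith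
        calc S i j - X i j = S i j * (1 - X i j / S i j) := by field_simp
        _ ≤ S i j * Real.log (S i j / X i j) := by
            apply mul_le_mul_of_nonneg_left h3 hSp.le
      · rw [← hSz]; simp; linarith
    · have hXz : X i j = 0 := le_antisymm (not_lt.1 hX) (hnn i j)
      have hSz : S i j = 0 := by
        by_contra hc
        exact hX (hsupp i j (lt_of_le_of_ne (hS i j) (Ne.symm hc)))
      rw [if_neg hX, hXz, hSz]; simp
  have : ∑ i, ∑ j, (S i j - X i j) ≤ relEnt S X := by
    unfold relEnt
    exact Finset.sum_le_sum fun i _ => Finset.sum_le_sum fun j _ => key i j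
  have hz : ∑ i, ∑ j, (S i j - X i j) = 0 := by
    simp only [Finset.sum_sub_distrib, hStot, hXtot, sub_self]
  linarith

lemma sum_mul_log_le
    (ha : ∀ i, 0 < a i) (hsa : ∑ i, a i = 1)
    {R : Fin p → ℝ} (hR : ∀ i, 0 < R i) (hRa : ∑ i, a i * R i = 1)
    {K : ℝ} (hK : 1 ≤ K) (hRK : ∀ i, R i ≤ K) :
    ∑ i, a i * (R i - 1) ^ 2 / (4 * K ^ 2) ≤ - ∑ i, a i * Real.log (R i) := by
  have key : ∀ i, a i * (R i - 1) ^ 2 / (4 * K ^ 2) ≤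
      a i * (R i - 1 - Real.log (R i)) := by
    intro i
    have h := quad_log_bound (hR i) (hRK i) hK
    calc a i * (R i - 1) ^ 2 / (4 * K ^ 2) = a i * ((R i - 1) ^ 2 / (4 * K ^ 2)) := by ring
    _ ≤ a i * (R i - 1 - Real.log (R i)) := mul_le_mul_of_nonneg_left h (ha i).le
  have h1 : ∑ i, a i * (R i - 1) ^ 2 / (4 * K ^ 2) ≤
      ∑ i, a i * (R i - 1 - Real.log (R i)) := Finset.sum_le_sum fun i _ => key i
  have h2 : ∑ i, a i * (R i - 1 - Real.log (R i)) =
      (∑ i, a i * R i) - (∑ i, a i) - ∑ i, a i * Real.log (R i) := by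
    rw [← Finset.sum_sub_distrib, ← Finset.sum_sub_distrib]
    refine Finset.sum_congr rfl fun i _ => ?_
    ring
  rw [h2, hRa, hsa] at h1
  linarith

end Entropy


section Gaps

variable {a : Fin p → ℝ} {b : Fin q → ℝ} {X : Matrix (Fin p) (Fin q) ℝ}

noncomputable def rowGap (a : Fin p → ℝ) (X : Matrix (Fin p) (Fin q) ℝ) : ℝ :=
  ∑ i, |rowSum X i - a i|

noncomputable def colGap (b : Fin q → ℝ) (X : Matrix (Fin p) (Fin q) ℝ) : ℝ :=
  ∑ j, |colSum X j - b j|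

lemma rowGap_nonneg : 0 ≤ rowGap a X :=
  Finset.sum_nonneg fun i _ => abs_nonneg _

lemma colGap_nonneg : 0 ≤ colGap b X :=
  Finset.sum_nonneg fun j _ => abs_nonneg _

lemma abs_rowSum_eq (ha : 0 < a i) : |rowSum X i - a i| = a i * |Rrat a X i - 1| := by
  have h : rowSum X i - a i = a i * (Rrat a X i - 1) := by
    unfold Rrat
    field_simp
  rw [h, abs_mul, abs_of_pos ha]

lemma abs_colSum_eq (hb : 0 < b j) : |colSum X j - b j| = b j * |Crat b X j - 1| := by
  have h : colSum X j - b j = b j * (Crat b X j - 1) := by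
    unfold Crat
    field_simp
  rw [h, abs_mul, abs_of_pos hb]

lemma rowGap_eq (ha : ∀ i, 0 < a i) :
    rowGap a X = ∑ i, a i * |Rrat a X i - 1| :=
  Finset.sum_congr rfl fun i _ => abs_rowSum_eq (ha i)

lemma colGap_eq (hb : ∀ j, 0 < b j) :
    colGap b X = ∑ j, b j * |Crat b X j - 1| :=
  Finset.sum_congr rfl fun j _ => abs_colSum_eq (hb j)

lemma rowGap_sq_le (ha : ∀ i, 0 < a i) (hsa : ∑ i, a i = 1) :
    rowGap a X ^ 2 ≤ ∑ i, a i * (Rrat a X i - 1) ^ 2 := by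
  rw [rowGap_eq ha]
  have := Finset.sum_mul_sq_le_sq_mul_sq Finset.univ (fun i => Real.sqrt (a i))
    (fun i => Real.sqrt (a i) * |Rrat a X i - 1|)
  have h1 : ∀ i : Fin p, Real.sqrt (a i) * (Real.sqrt (a i) * |Rrat a X i - 1|) =
      a i * |Rrat a X i - 1| := by
    intro i
    rw [← mul_assoc, Real.mul_self_sqrt (ha i).le]
  have h2 : ∀ i : Fin p, Real.sqrt (a i) ^ 2 = a i := fun i => Real.sq_sqrt (ha i).le
  have h3 : ∀ i : Fin p, (Real.sqrt (a i) * |Rrat a X i - 1|) ^ 2 =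
      a i * (Rrat a X i - 1) ^ 2 := by
    intro i
    rw [mul_pow, h2, sq_abs]
  calc (∑ i, a i * |Rrat a X i - 1|) ^ 2
      = (∑ i, Real.sqrt (a i) * (Real.sqrt (a i) * |Rrat a X i - 1|)) ^ 2 := by
        rw [Finset.sum_congr rfl fun i _ => (h1 i).symm]
    _ ≤ (∑ i, Real.sqrt (a i) ^ 2) * ∑ i, (Real.sqrt (a i) * |Rrat a X i - 1|) ^ 2 := this
    _ = ∑ i, a i * (Rrat a X i - 1) ^ 2 := by
        rw [Finset.sum_congr rfl fun i _ => h2 i, Finset.sum_congr rfl fun i _ => h3 i,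
          hsa, one_mul]

lemma colGap_sq_le (hb : ∀ j, 0 < b j) (hsb : ∑ j, b j = 1) :
    colGap b X ^ 2 ≤ ∑ j, b j * (Crat b X j - 1) ^ 2 := by
  rw [colGap_eq hb]
  have := Finset.sum_mul_sq_le_sq_mul_sq Finset.univ (fun j => Real.sqrt (b j))
    (fun j => Real.sqrt (b j) * |Crat b X j - 1|)
  have h1 : ∀ j : Fin q, Real.sqrt (b j) * (Real.sqrt (b j) * |Crat b X j - 1|) =
      b j * |Crat b X j - 1| := by
    intro j
    rw [← mul_assoc, Real.mul_self_sqrt (hb j).le]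
  have h2 : ∀ j : Fin q, Real.sqrt (b j) ^ 2 = b j := fun j => Real.sq_sqrt (hb j).le
  have h3 : ∀ j : Fin q, (Real.sqrt (b j) * |Crat b X j - 1|) ^ 2 =
      b j * (Crat b X j - 1) ^ 2 := by
    intro j
    rw [mul_pow, h2, sq_abs]
  calc (∑ j, b j * |Crat b X j - 1|) ^ 2
      = (∑ j, Real.sqrt (b j) * (Real.sqrt (b j) * |Crat b X j - 1|)) ^ 2 := by
        rw [Finset.sum_congr rfl fun j _ => (h1 j).symm]
    _ ≤ (∑ j, Real.sqrt (b j) ^ 2) * ∑ j, (Real.sqrt (b j) * |Crat b X j - 1|) ^ 2 := this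
    _ = ∑ j, b j * (Crat b X j - 1) ^ 2 := by
        rw [Finset.sum_congr rfl fun j _ => h2 j, Finset.sum_congr rfl fun j _ => h3 j,
          hsb, one_mul]

lemma abs_Rrat_sub_one_le (ha : ∀ i, 0 < a i) (i : Fin p) :
    |Rrat a X i - 1| ≤ rowGap a X / a i := by
  rw [le_div_iff₀ (ha i)]
  have h1 : |Rrat a X i - 1| * a i = |rowSum X i - a i| := by
    rw [mul_comm, ← abs_rowSum_eq (ha i)]
  rw [h1]
  unfold rowGap
  exact Finset.single_le_sum (f := fun i => |rowSum X i - a i|)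
    (fun i _ => abs_nonneg _) (Finset.mem_univ i)

lemma abs_Crat_sub_one_le (hb : ∀ j, 0 < b j) (j : Fin q) :
    |Crat b X j - 1| ≤ colGap b X / b j := by
  rw [le_div_iff₀ (hb j)]
  have h1 : |Crat b X j - 1| * b j = |colSum X j - b j| := by
    rw [mul_comm, ← abs_colSum_eq (hb j)]
  rw [h1]
  unfold colGap
  exact Finset.single_le_sum (f := fun j => |colSum X j - b j|)
    (fun j _ => abs_nonneg _) (Finset.mem_univ j)

lemma gap_TR (ha : ∀ i, 0 < a i) (hnn : ∀ i j, 0 ≤ X i j) (hr : ∀ i, 0 < rowSum X i) :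
    ∑ j, |colSum (TR a X) j - colSum X j| ≤ rowGap a X := by
  have hR : ∀ i, 0 < Rrat a X i := fun i => Rrat_pos (ha i) (hr i)
  calc ∑ j, |colSum (TR a X) j - colSum X j|
      = ∑ j, |∑ i, (TR a X i j - X i j)| := by
        refine Finset.sum_congr rfl fun j _ => ?_
        rw [Finset.sum_sub_distrib]
        rfl
    _ ≤ ∑ j, ∑ i, |TR a X i j - X i j| :=
        Finset.sum_le_sum fun j _ => Finset.abs_sum_le_sum_abs _ _
    _ = ∑ i, ∑ j, |TR a X i j - X i j| := Finset.sum_comm ..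
    _ = rowGap a X := by
        refine Finset.sum_congr rfl fun i _ => ?_
        have step : ∀ j, |TR a X i j - X i j| = X i j * |1 / Rrat a X i - 1| := by
          intro j
          have h0 : TR a X i j - X i j = X i j * (1 / Rrat a X i - 1) := by
            unfold TR
            rw [mul_sub, mul_one, mul_one_div]
          rw [h0, abs_mul, abs_of_nonneg (hnn i j)]
        have hnr : (0:ℝ) ≤ rowSum X i := (hr i).le
        have e0 : rowSum X i * (1 / Rrat a X i - 1) = a i - rowSum X i := by
          have h0 : rowSum X i ≠ 0 := (hr i).ne'
          have h1 : a i ≠ 0 := (ha i).ne'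
          unfold Rrat
          field_simp
        calc ∑ j, |TR a X i j - X i j| = ∑ j, X i j * |1 / Rrat a X i - 1| :=
              Finset.sum_congr rfl fun j _ => step j
          _ = rowSum X i * |1 / Rrat a X i - 1| := by rw [← Finset.sum_mul]; rfl
          _ = |rowSum X i * (1 / Rrat a X i - 1)| := by
              rw [abs_mul, abs_of_nonneg hnr]
          _ = |rowSum X i - a i| := by rw [e0, abs_sub_comm]

lemma gap_TC (hb : ∀ j, 0 < b j) (hnn : ∀ i j, 0 ≤ X i j) (hc : ∀ j, 0 < colSum X j) :
    ∑ i, |rowSum (TC b X) i - rowSum X i| ≤ colGap b X := by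
  have hC : ∀ j, 0 < Crat b X j := fun j => Crat_pos (hb j) (hc j)
  calc ∑ i, |rowSum (TC b X) i - rowSum X i|
      = ∑ i, |∑ j, (TC b X i j - X i j)| := by
        refine Finset.sum_congr rfl fun i _ => ?_
        rw [Finset.sum_sub_distrib]
        rfl
    _ ≤ ∑ i, ∑ j, |TC b X i j - X i j| :=
        Finset.sum_le_sum fun i _ => Finset.abs_sum_le_sum_abs _ _
    _ = ∑ j, ∑ i, |TC b X i j - X i j| := Finset.sum_comm ..
    _ = colGap b X := by
        refine Finset.sum_congr rfl fun j _ => ?_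
        have step : ∀ i, |TC b X i j - X i j| = X i j * |1 / Crat b X j - 1| := by
          intro i
          have h0 : TC b X i j - X i j = X i j * (1 / Crat b X j - 1) := by
            unfold TC
            rw [mul_sub, mul_one, mul_one_div]
          rw [h0, abs_mul, abs_of_nonneg (hnn i j)]
        have hnr : (0:ℝ) ≤ colSum X j := (hc j).le
        have e0 : colSum X j * (1 / Crat b X j - 1) = b j - colSum X j := by
          have h0 : colSum X j ≠ 0 := (hc j).ne'
          have h1 : b j ≠ 0 := (hb j).ne'
          unfold Crat
          field_simp
        calc ∑ i, |TC b X i j - X i j| = ∑ i, X i j * |1 / Crat b X j - 1| :=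
              Finset.sum_congr rfl fun i _ => step i
          _ = colSum X j * |1 / Crat b X j - 1| := by rw [← Finset.sum_mul]; rfl
          _ = |colSum X j * (1 / Crat b X j - 1)| := by
              rw [abs_mul, abs_of_nonneg hnr]
          _ = |colSum X j - b j| := by rw [e0, abs_sub_comm]

end Gaps




lemma tendsto_nat_mul_of_antitone_summable {f : ℕ → ℝ} (hf : Antitone f) (hs : Summable f) :
    Tendsto (fun n : ℕ => (n : ℝ) * f n) atTop (nhds 0) := by
  have hnn : ∀ n, 0 ≤ f n := by
    intro n
    exact le_of_tendsto hs.tendsto_atTop_zero (eventually_atTop.2 ⟨n, fun m hm => hf hm⟩)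
  have htail : Tendsto (fun m => ∑' k, f (k + m)) atTop (nhds 0) := by
    simpa using (tendsto_sum_nat_add f)
  have hdiv : Tendsto (fun n : ℕ => n / 2) atTop atTop :=
    tendsto_atTop_atTop.2 fun c => ⟨2 * c + 1, fun n hn => by omega⟩
  have hbound : ∀ n : ℕ, (n : ℝ) * f n ≤ 2 * ∑' k, f (k + n / 2) := by
    intro n
    set m := n / 2 with hm
    have hsum : Summable fun k => f (k + m) := (summable_nat_add_iff m).2 hs
    have h1 : ((n - m : ℕ) : ℝ) * f n ≤ ∑ k ∈ Finset.Ico m n, f k := by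
      have := Finset.card_nsmul_le_sum (Finset.Ico m n) f (f n)
        (fun k hk => hf (le_of_lt (Finset.mem_Ico.1 hk).2))
      rw [Nat.card_Ico] at this
      simpa [nsmul_eq_mul] using this
    have h2 : ∑ k ∈ Finset.Ico m n, f k ≤ ∑' k, f (k + m) := by
      rw [Finset.sum_Ico_eq_sum_range]
      have := Summable.sum_le_tsum (Finset.range (n - m)) (fun k _ => hnn (k + m)) hsum
      simpa [add_comm] using this
    have h3 : (n : ℝ) ≤ 2 * ((n - m : ℕ) : ℝ) := by
      have : n ≤ 2 * (n - m) := by omega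
      exact_mod_cast by exact_mod_cast this
    nlinarith [hnn n, h1.trans h2]
  have hbz : ∀ n : ℕ, 0 ≤ (n : ℝ) * f n := fun n => mul_nonneg (Nat.cast_nonneg n) (hnn n)
  have hgz : Tendsto (fun n : ℕ => 2 * ∑' k, f (k + n / 2)) atTop (nhds 0) := by
    have := (htail.comp hdiv).const_mul (2 : ℝ)
    simpa using this
  exact squeeze_zero hbz hbound hgz

lemma tendsto_zero_of_even_odd {u : ℕ → ℝ}
    (he : Tendsto (fun k => u (2 * k)) atTop (nhds 0))
    (ho : Tendsto (fun k => u (2 * k + 1)) atTop (nhds 0)) :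
    Tendsto u atTop (nhds 0) := by
  rw [Metric.tendsto_atTop] at he ho ⊢
  intro ε hε
  obtain ⟨N1, h1⟩ := he ε hε
  obtain ⟨N2, h2⟩ := ho ε hε
  refine ⟨2 * (N1 + N2) + 2, fun n hn => ?_⟩
  rcases Nat.even_or_odd n with ⟨k, hk⟩ | ⟨k, hk⟩
  · have : n = 2 * k := by omega
    rw [this]; exact h1 k (by omega)
  · rw [hk]; exact h2 k (by omega)

end IPFP

open IPFP

set_option maxHeartbeats 4000000 in
/-- If `Γ(a,b)` contains a matrix with support included in `Supp(X_0)`,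
then:
(i) the series `Σ_n (R_i(X_{2n}) − 1)²` and `Σ_n (C_j(X_{2n+1}) − 1)²` converge;
(ii) `√n·(R_i(X_n) − 1) → 0` and `√n·(C_j(X_n) − 1) → 0`; in particular
`R_i(X_n) → 1` and `C_j(X_n) → 1`. -/
theorem ipfp_marginal_ratios_convergence
    (p q : ℕ) (hp : 2 ≤ p) (hq : 2 ≤ q)
    (a : Fin p → ℝ) (b : Fin q → ℝ)
    (ha : ∀ i, 0 < a i) (hb : ∀ j, 0 < b j)
    (hsa : ∑ i, a i = 1) (hsb : ∑ j, b j = 1)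
    (X0 : Matrix (Fin p) (Fin q) ℝ) (hX0 : memGamma1 X0)
    (h : ∃ S, memGammaSub a b X0 S) :
    (∀ i, Summable fun n => (Rrat a (ipfp a b X0 (2 * n)) i - 1) ^ 2) ∧
    (∀ j, Summable fun n => (Crat b (ipfp a b X0 (2 * n + 1)) j - 1) ^ 2) ∧
    (∀ i, Tendsto (fun n : ℕ => Real.sqrt (n : ℝ) * (Rrat a (ipfp a b X0 n) i - 1))
      atTop (nhds 0)) ∧
    (∀ j, Tendsto (fun n : ℕ => Real.sqrt (n : ℝ) * (Crat b (ipfp a b X0 n) j - 1))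
      atTop (nhds 0)) ∧
    (∀ i, Tendsto (fun n => Rrat a (ipfp a b X0 n) i) atTop (nhds 1)) ∧
    (∀ j, Tendsto (fun n => Crat b (ipfp a b X0 n) j) atTop (nhds 1)) := by
  classical
  obtain ⟨S, ⟨⟨⟨hSnn, hSrpos, hScpos⟩, hSrow, hScol⟩, hSsupp⟩⟩ := h
  have hstepR : ∀ n, Even n → ipfp a b X0 (n+1) = TR a (ipfp a b X0 n) := by
    intro n hn; simp [ipfp, hn]
  have hstepC : ∀ n, ¬ Even n → ipfp a b X0 (n+1) = TC b (ipfp a b X0 n) := by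
    intro n hn; simp [ipfp, hn]
  have hoddf : ∀ k : ℕ, ¬ Even (2*k+1) := by
    intro k hcon; obtain ⟨r, hr⟩ := hcon; omega
  have good : ∀ n, memGamma1 (ipfp a b X0 n) ∧
      ∀ i j, (0 < ipfp a b X0 n i j ↔ 0 < X0 i j) := by
    intro n
    induction n with
    | zero => exact ⟨hX0, fun i j => Iff.rfl⟩
    | succ n ih =>
      obtain ⟨hG, hiff⟩ := ih
      by_cases hn : Even n
      · rw [hstepR n hn]
        have hRpos : ∀ i, 0 < Rrat a (ipfp a b X0 n) i :=
          fun i => Rrat_pos (ha i) (hG.1.2.1 i)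
        exact ⟨memGamma1_TR ha hsa hG,
          fun i j => (TR_pos_iff (hRpos i) (hG.1.1 i j)).trans (hiff i j)⟩
      · rw [hstepC n hn]
        have hCpos : ∀ j, 0 < Crat b (ipfp a b X0 n) j :=
          fun j => Crat_pos (hb j) (hG.1.2.2 j)
        exact ⟨memGamma1_TC hb hsb hG,
          fun i j => (TC_pos_iff (hCpos j) (hG.1.1 i j)).trans (hiff i j)⟩
  have hnn : ∀ n i j, 0 ≤ ipfp a b X0 n i j := fun n => (good n).1.1.1
  have hrp : ∀ n i, 0 < rowSum (ipfp a b X0 n) i := fun n => (good n).1.1.2.1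
  have hcp : ∀ n j, 0 < colSum (ipfp a b X0 n) j := fun n => (good n).1.1.2.2
  have htot : ∀ n, ∑ i, ∑ j, ipfp a b X0 n i j = 1 := fun n => (good n).1.2
  have hRp : ∀ n i, 0 < Rrat a (ipfp a b X0 n) i := fun n i => Rrat_pos (ha i) (hrp n i)
  have hCp : ∀ n j, 0 < Crat b (ipfp a b X0 n) j := fun n j => Crat_pos (hb j) (hcp n j)
  have hsupp : ∀ n i j, 0 < S i j → 0 < ipfp a b X0 n i j :=
    fun n i j hSp => ((good n).2 i j).2 (hSsupp i j hSp)
  have hStot : ∑ i, ∑ j, S i j = 1 := by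
    calc ∑ i, ∑ j, S i j = ∑ i, rowSum S i := rfl
      _ = ∑ i, a i := Finset.sum_congr rfl fun i _ => hSrow i
      _ = 1 := hsa
  have hrow_step : ∀ n, Even n → ∀ i, rowSum (ipfp a b X0 (n+1)) i = a i := by
    intro n hn i; rw [hstepR n hn]; exact rowSum_TR (ha i) (hrp n i)
  have hcol_step : ∀ n, ¬ Even n → ∀ j, colSum (ipfp a b X0 (n+1)) j = b j := by
    intro n hn j; rw [hstepC n hn]; exact colSum_TC (hb j) (hcp n j)
  have hrg_odd : ∀ k, rowGap a (ipfp a b X0 (2*k+1)) = 0 := by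
    intro k
    refine Finset.sum_eq_zero fun i _ => ?_
    rw [hrow_step (2*k) (even_two_mul k) i]
    simp
  have hcg_even : ∀ k, colGap b (ipfp a b X0 (2*k+2)) = 0 := by
    intro k
    refine Finset.sum_eq_zero fun j _ => ?_
    rw [show 2*k+2 = (2*k+1)+1 from rfl, hcol_step (2*k+1) (hoddf k) j]
    simp
  -- uniform bound K
  set K : ℝ := (∑ i, (a i)⁻¹) + (∑ j, (b j)⁻¹) + 1 with hKdef
  have hsuma : (0:ℝ) ≤ ∑ i, (a i)⁻¹ :=
    Finset.sum_nonneg fun i _ => (inv_pos.2 (ha i)).le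
  have hsumb : (0:ℝ) ≤ ∑ j, (b j)⁻¹ :=
    Finset.sum_nonneg fun j _ => (inv_pos.2 (hb j)).le
  have hK1 : (1:ℝ) ≤ K := by rw [hKdef]; linarith
  have hKa : ∀ i, (a i)⁻¹ ≤ K := by
    intro i
    have h1 : (a i)⁻¹ ≤ ∑ i', (a i')⁻¹ :=
      Finset.single_le_sum (f := fun i' => (a i')⁻¹)
        (fun i' _ => (inv_pos.2 (ha i')).le) (Finset.mem_univ i)
    rw [hKdef]; linarith
  have hKb : ∀ j, (b j)⁻¹ ≤ K := by
    intro j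
    have h1 : (b j)⁻¹ ≤ ∑ j', (b j')⁻¹ :=
      Finset.single_le_sum (f := fun j' => (b j')⁻¹)
        (fun j' _ => (inv_pos.2 (hb j')).le) (Finset.mem_univ j)
    rw [hKdef]; linarith
  have hrow_le_one : ∀ n i, rowSum (ipfp a b X0 n) i ≤ 1 := by
    intro n i
    calc rowSum (ipfp a b X0 n) i ≤ ∑ i', rowSum (ipfp a b X0 n) i' :=
          Finset.single_le_sum (f := fun i' => rowSum (ipfp a b X0 n) i')
            (fun i' _ => (hrp n i').le) (Finset.mem_univ i)
      _ = 1 := htot n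
  have hcol_le_one : ∀ n j, colSum (ipfp a b X0 n) j ≤ 1 := by
    intro n j
    have h1 : ∑ j', colSum (ipfp a b X0 n) j' = 1 := by
      rw [show ∑ j', colSum (ipfp a b X0 n) j'
          = ∑ j', ∑ i, ipfp a b X0 n i j' from rfl, Finset.sum_comm]
      exact htot n
    calc colSum (ipfp a b X0 n) j ≤ ∑ j', colSum (ipfp a b X0 n) j' :=
          Finset.single_le_sum (f := fun j' => colSum (ipfp a b X0 n) j')
            (fun j' _ => (hcp n j').le) (Finset.mem_univ j)
      _ = 1 := h1
  have hRle : ∀ n i, Rrat a (ipfp a b X0 n) i ≤ K := by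
    intro n i
    have h1 : Rrat a (ipfp a b X0 n) i ≤ 1 / a i := by
      unfold Rrat
      gcongr
      · exact (ha i).le
      · exact hrow_le_one n i
    calc Rrat a (ipfp a b X0 n) i ≤ 1 / a i := h1
      _ = (a i)⁻¹ := one_div _
      _ ≤ K := hKa i
  have hCle : ∀ n j, Crat b (ipfp a b X0 n) j ≤ K := by
    intro n j
    have h1 : Crat b (ipfp a b X0 n) j ≤ 1 / b j := by
      unfold Crat
      gcongr
      · exact (hb j).le
      · exact hcol_le_one n j
    calc Crat b (ipfp a b X0 n) j ≤ 1 / b j := h1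
      _ = (b j)⁻¹ := one_div _
      _ ≤ K := hKb j
  have hK2 : (0:ℝ) < 4 * K ^ 2 := by positivity
  -- entropy drops
  have hf0 : ∀ n, 0 ≤ relEnt S (ipfp a b X0 n) :=
    fun n => relEnt_nonneg (hsupp n) hSnn (hnn n) hStot (htot n)
  have hdropR : ∀ n, Even n →
      ∑ i, a i * (Rrat a (ipfp a b X0 n) i - 1) ^ 2 / (4 * K ^ 2) ≤
        relEnt S (ipfp a b X0 n) - relEnt S (ipfp a b X0 (n+1)) := by
    intro n hn
    have he : relEnt S (ipfp a b X0 (n+1)) = relEnt S (ipfp a b X0 n)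
        + ∑ i, a i * Real.log (Rrat a (ipfp a b X0 n) i) := by
      rw [hstepR n hn, relEnt_TR (hsupp n) hSnn (hnn n) (hRp n)]
      congr 1
      exact Finset.sum_congr rfl fun i _ => by rw [hSrow i]
    have hRa : ∑ i, a i * Rrat a (ipfp a b X0 n) i = 1 := by
      have h1 : ∀ i, a i * Rrat a (ipfp a b X0 n) i = rowSum (ipfp a b X0 n) i := by
        intro i; unfold Rrat; rw [← mul_div_assoc, mul_div_cancel_left₀ _ (ha i).ne']
      rw [Finset.sum_congr rfl fun i _ => h1 i]
      exact htot n
    have h2 := sum_mul_log_le ha hsa (hRp n) hRa hK1 (hRle n)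
    linarith
  have hdropC : ∀ n, ¬ Even n →
      ∑ j, b j * (Crat b (ipfp a b X0 n) j - 1) ^ 2 / (4 * K ^ 2) ≤
        relEnt S (ipfp a b X0 n) - relEnt S (ipfp a b X0 (n+1)) := by
    intro n hn
    have he : relEnt S (ipfp a b X0 (n+1)) = relEnt S (ipfp a b X0 n)
        + ∑ j, b j * Real.log (Crat b (ipfp a b X0 n) j) := by
      rw [hstepC n hn, relEnt_TC (hsupp n) hSnn (hnn n) (hCp n)]
      congr 1
      exact Finset.sum_congr rfl fun j _ => by rw [hScol j]
    have hCa : ∑ j, b j * Crat b (ipfp a b X0 n) j = 1 := by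
      have h1 : ∀ j, b j * Crat b (ipfp a b X0 n) j = colSum (ipfp a b X0 n) j := by
        intro j; unfold Crat; rw [← mul_div_assoc, mul_div_cancel_left₀ _ (hb j).ne']
      rw [Finset.sum_congr rfl fun j _ => h1 j]
      rw [show ∑ j', colSum (ipfp a b X0 n) j'
          = ∑ j', ∑ i, ipfp a b X0 n i j' from rfl, Finset.sum_comm]
      exact htot n
    have h2 := sum_mul_log_le hb hsb (hCp n) hCa hK1 (hCle n)
    linarith
  have hmono : ∀ n, relEnt S (ipfp a b X0 (n+1)) ≤ relEnt S (ipfp a b X0 n) := by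
    intro n
    by_cases hn : Even n
    · have h1 := hdropR n hn
      have h2 : 0 ≤ ∑ i, a i * (Rrat a (ipfp a b X0 n) i - 1) ^ 2 / (4 * K ^ 2) :=
        Finset.sum_nonneg fun i _ =>
          div_nonneg (mul_nonneg (ha i).le (sq_nonneg _)) hK2.le
      linarith
    · have h1 := hdropC n hn
      have h2 : 0 ≤ ∑ j, b j * (Crat b (ipfp a b X0 n) j - 1) ^ 2 / (4 * K ^ 2) :=
        Finset.sum_nonneg fun j _ =>
          div_nonneg (mul_nonneg (hb j).le (sq_nonneg _)) hK2.le
      linarith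
  have hkey : ∀ N : ℕ, ∑ n ∈ Finset.range N,
      (relEnt S (ipfp a b X0 (2*n)) - relEnt S (ipfp a b X0 (2*(n+1)))) ≤
        relEnt S (ipfp a b X0 0) := by
    intro N
    rw [Finset.sum_range_sub' (fun n => relEnt S (ipfp a b X0 (2*n))) N]
    have := hf0 (2*N)
    simp only [Nat.mul_zero]
    linarith
  have hdrop2R : ∀ n, ∑ i, a i * (Rrat a (ipfp a b X0 (2*n)) i - 1) ^ 2 / (4 * K ^ 2) ≤
      relEnt S (ipfp a b X0 (2*n)) - relEnt S (ipfp a b X0 (2*(n+1))) := by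
    intro n
    have h1 := hdropR (2*n) (even_two_mul n)
    have h2 := hmono (2*n+1)
    rw [show 2*(n+1) = (2*n+1)+1 from by ring]
    linarith
  have hdrop2C : ∀ n, ∑ j, b j * (Crat b (ipfp a b X0 (2*n+1)) j - 1) ^ 2 / (4 * K ^ 2) ≤
      relEnt S (ipfp a b X0 (2*n)) - relEnt S (ipfp a b X0 (2*(n+1))) := by
    intro n
    have h1 := hdropC (2*n+1) (hoddf n)
    have h2 := hmono (2*n)
    rw [show 2*(n+1) = (2*n+1)+1 from by ring]
    linarith
  have hsumR : Summable (fun n => ∑ i, a i * (Rrat a (ipfp a b X0 (2*n)) i - 1) ^ 2) := by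
    apply summable_of_sum_range_le
      (c := relEnt S (ipfp a b X0 0) * (4 * K ^ 2))
      (fun n => Finset.sum_nonneg fun i _ => mul_nonneg (ha i).le (sq_nonneg _))
    intro N
    have h1 : ∑ n ∈ Finset.range N,
        (∑ i, a i * (Rrat a (ipfp a b X0 (2*n)) i - 1) ^ 2 / (4 * K ^ 2)) ≤
        relEnt S (ipfp a b X0 0) :=
      (Finset.sum_le_sum fun n _ => hdrop2R n).trans (hkey N)
    have h2 : ∑ n ∈ Finset.range N,
        (∑ i, a i * (Rrat a (ipfp a b X0 (2*n)) i - 1) ^ 2 / (4 * K ^ 2)) =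
        (∑ n ∈ Finset.range N, ∑ i, a i * (Rrat a (ipfp a b X0 (2*n)) i - 1) ^ 2)
          / (4 * K ^ 2) := by
      rw [Finset.sum_div]
      exact Finset.sum_congr rfl fun n _ => by rw [Finset.sum_div]
    rw [h2, div_le_iff₀ hK2] at h1
    linarith
  have hsumC : Summable (fun n => ∑ j, b j * (Crat b (ipfp a b X0 (2*n+1)) j - 1) ^ 2) := by
    apply summable_of_sum_range_le
      (c := relEnt S (ipfp a b X0 0) * (4 * K ^ 2))
      (fun n => Finset.sum_nonneg fun j _ => mul_nonneg (hb j).le (sq_nonneg _))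
    intro N
    have h1 : ∑ n ∈ Finset.range N,
        (∑ j, b j * (Crat b (ipfp a b X0 (2*n+1)) j - 1) ^ 2 / (4 * K ^ 2)) ≤
        relEnt S (ipfp a b X0 0) :=
      (Finset.sum_le_sum fun n _ => hdrop2C n).trans (hkey N)
    have h2 : ∑ n ∈ Finset.range N,
        (∑ j, b j * (Crat b (ipfp a b X0 (2*n+1)) j - 1) ^ 2 / (4 * K ^ 2)) =
        (∑ n ∈ Finset.range N, ∑ j, b j * (Crat b (ipfp a b X0 (2*n+1)) j - 1) ^ 2)
          / (4 * K ^ 2) := by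
      rw [Finset.sum_div]
      exact Finset.sum_congr rfl fun n _ => by rw [Finset.sum_div]
    rw [h2, div_le_iff₀ hK2] at h1
    linarith
  have conc1 : ∀ i, Summable fun n => (Rrat a (ipfp a b X0 (2*n)) i - 1) ^ 2 := by
    intro i
    refine Summable.of_nonneg_of_le (fun n => sq_nonneg _) ?_ (hsumR.mul_left (a i)⁻¹)
    intro n
    have h1 : a i * (Rrat a (ipfp a b X0 (2*n)) i - 1) ^ 2 ≤
        ∑ i', a i' * (Rrat a (ipfp a b X0 (2*n)) i' - 1) ^ 2 :=
      Finset.single_le_sum (f := fun i' => a i' * (Rrat a (ipfp a b X0 (2*n)) i' - 1) ^ 2)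
        (fun i' _ => mul_nonneg (ha i').le (sq_nonneg _)) (Finset.mem_univ i)
    calc (Rrat a (ipfp a b X0 (2*n)) i - 1) ^ 2
        = (a i)⁻¹ * (a i * (Rrat a (ipfp a b X0 (2*n)) i - 1) ^ 2) := by
          rw [← mul_assoc, inv_mul_cancel₀ (ha i).ne', one_mul]
      _ ≤ (a i)⁻¹ * ∑ i', a i' * (Rrat a (ipfp a b X0 (2*n)) i' - 1) ^ 2 :=
          mul_le_mul_of_nonneg_left h1 (inv_pos.2 (ha i)).le
  have conc2 : ∀ j, Summable fun n => (Crat b (ipfp a b X0 (2*n+1)) j - 1) ^ 2 := by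
    intro j
    refine Summable.of_nonneg_of_le (fun n => sq_nonneg _) ?_ (hsumC.mul_left (b j)⁻¹)
    intro n
    have h1 : b j * (Crat b (ipfp a b X0 (2*n+1)) j - 1) ^ 2 ≤
        ∑ j', b j' * (Crat b (ipfp a b X0 (2*n+1)) j' - 1) ^ 2 :=
      Finset.single_le_sum (f := fun j' => b j' * (Crat b (ipfp a b X0 (2*n+1)) j' - 1) ^ 2)
        (fun j' _ => mul_nonneg (hb j').le (sq_nonneg _)) (Finset.mem_univ j)
    calc (Crat b (ipfp a b X0 (2*n+1)) j - 1) ^ 2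
        = (b j)⁻¹ * (b j * (Crat b (ipfp a b X0 (2*n+1)) j - 1) ^ 2) := by
          rw [← mul_assoc, inv_mul_cancel₀ (hb j).ne', one_mul]
      _ ≤ (b j)⁻¹ * ∑ j', b j' * (Crat b (ipfp a b X0 (2*n+1)) j' - 1) ^ 2 :=
          mul_le_mul_of_nonneg_left h1 (inv_pos.2 (hb j)).le
  -- gap monotonicity
  have hGT1 : ∀ k, 1 ≤ k → colGap b (ipfp a b X0 (2*k+1)) ≤ rowGap a (ipfp a b X0 (2*k)) := by
    intro k hk
    have hcolb : ∀ j, colSum (ipfp a b X0 (2*k)) j = b j := by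
      intro j
      obtain ⟨m, rfl⟩ : ∃ m, k = m + 1 := ⟨k - 1, by omega⟩
      rw [show 2*(m+1) = (2*m+1)+1 from by ring]
      exact hcol_step (2*m+1) (hoddf m) j
    have hmain := gap_TR (X := ipfp a b X0 (2*k)) ha (hnn (2*k)) (hrp (2*k))
    rw [show (2*k+1 : ℕ) = (2*k)+1 from rfl, hstepR (2*k) (even_two_mul k)]
    calc colGap b (TR a (ipfp a b X0 (2*k)))
        = ∑ j, |colSum (TR a (ipfp a b X0 (2*k))) j - colSum (ipfp a b X0 (2*k)) j| := by
          unfold colGap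
          exact Finset.sum_congr rfl fun j _ => by rw [hcolb j]
      _ ≤ rowGap a (ipfp a b X0 (2*k)) := hmain
  have hGT2 : ∀ k, rowGap a (ipfp a b X0 (2*k+2)) ≤ colGap b (ipfp a b X0 (2*k+1)) := by
    intro k
    have hrowa : ∀ i, rowSum (ipfp a b X0 (2*k+1)) i = a i :=
      hrow_step (2*k) (even_two_mul k)
    have hmain := gap_TC (X := ipfp a b X0 (2*k+1)) hb (hnn (2*k+1)) (hcp (2*k+1))
    rw [show (2*k+2 : ℕ) = (2*k+1)+1 from rfl, hstepC (2*k+1) (hoddf k)]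
    calc rowGap a (TC b (ipfp a b X0 (2*k+1)))
        = ∑ i, |rowSum (TC b (ipfp a b X0 (2*k+1))) i - rowSum (ipfp a b X0 (2*k+1)) i| := by
          unfold rowGap
          exact Finset.sum_congr rfl fun i _ => by rw [hrowa i]
      _ ≤ colGap b (ipfp a b X0 (2*k+1)) := hmain
  have hCG_anti : Antitone (fun k => colGap b (ipfp a b X0 (2*k+1))) := by
    apply antitone_nat_of_succ_le
    intro k
    calc colGap b (ipfp a b X0 (2*(k+1)+1)) ≤ rowGap a (ipfp a b X0 (2*(k+1))) :=
          hGT1 (k+1) (by omega)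
      _ = rowGap a (ipfp a b X0 (2*k+2)) := by rw [show 2*(k+1) = 2*k+2 from by ring]
      _ ≤ colGap b (ipfp a b X0 (2*k+1)) := hGT2 k
  have hA_anti : Antitone (fun k => rowGap a (ipfp a b X0 (2*(k+1)))) := by
    apply antitone_nat_of_succ_le
    intro k
    calc rowGap a (ipfp a b X0 (2*(k+1+1)))
        = rowGap a (ipfp a b X0 (2*(k+1)+2)) := by rw [show 2*(k+1+1) = 2*(k+1)+2 from by ring]
      _ ≤ colGap b (ipfp a b X0 (2*(k+1)+1)) := hGT2 (k+1)
      _ ≤ rowGap a (ipfp a b X0 (2*(k+1))) := hGT1 (k+1) (by omega)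
  -- summability of squared gaps
  have hRGsq_sum : Summable (fun n => rowGap a (ipfp a b X0 (2*n)) ^ 2) :=
    Summable.of_nonneg_of_le (fun n => sq_nonneg _)
      (fun n => rowGap_sq_le ha hsa) hsumR
  have hCGsq_sum : Summable (fun n => colGap b (ipfp a b X0 (2*n+1)) ^ 2) :=
    Summable.of_nonneg_of_le (fun n => sq_nonneg _)
      (fun n => colGap_sq_le hb hsb) hsumC
  have hA2_anti : Antitone (fun k => rowGap a (ipfp a b X0 (2*(k+1))) ^ 2) :=
    fun m n hle => pow_le_pow_left₀ rowGap_nonneg (hA_anti hle) 2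
  have hCG2_anti : Antitone (fun k => colGap b (ipfp a b X0 (2*k+1)) ^ 2) :=
    fun m n hle => pow_le_pow_left₀ colGap_nonneg (hCG_anti hle) 2
  have hA2sum : Summable (fun k => rowGap a (ipfp a b X0 (2*(k+1))) ^ 2) :=
    (summable_nat_add_iff 1).2 hRGsq_sum
  have hkA : Tendsto (fun k : ℕ => (k:ℝ) * rowGap a (ipfp a b X0 (2*(k+1))) ^ 2)
      atTop (nhds 0) := tendsto_nat_mul_of_antitone_summable hA2_anti hA2sum
  have hA0 : Tendsto (fun k => rowGap a (ipfp a b X0 (2*(k+1))) ^ 2) atTop (nhds 0) :=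
    hA2sum.tendsto_atTop_zero
  have hkRG : Tendsto (fun k : ℕ => (k:ℝ) * rowGap a (ipfp a b X0 (2*k)) ^ 2)
      atTop (nhds 0) := by
    rw [← tendsto_add_atTop_iff_nat 1]
    have heq : (fun k : ℕ => ((k+1 : ℕ):ℝ) * rowGap a (ipfp a b X0 (2*(k+1))) ^ 2)
        = fun k : ℕ => (k:ℝ) * rowGap a (ipfp a b X0 (2*(k+1))) ^ 2
            + rowGap a (ipfp a b X0 (2*(k+1))) ^ 2 := by
      funext k; push_cast; ring
    show Tendsto (fun k : ℕ => ((k+1 : ℕ):ℝ) * rowGap a (ipfp a b X0 (2*(k+1))) ^ 2)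
      atTop (nhds 0)
    rw [heq]
    simpa using hkA.add hA0
  have hkCG : Tendsto (fun k : ℕ => (k:ℝ) * colGap b (ipfp a b X0 (2*k+1)) ^ 2)
      atTop (nhds 0) := tendsto_nat_mul_of_antitone_summable hCG2_anti hCGsq_sum
  have hCG0 : Tendsto (fun k => colGap b (ipfp a b X0 (2*k+1)) ^ 2) atTop (nhds 0) :=
    hCGsq_sum.tendsto_atTop_zero
  -- sqrt-weighted gaps tend to zero
  have hw : Tendsto (fun n : ℕ => Real.sqrt (n:ℝ) * rowGap a (ipfp a b X0 n))
      atTop (nhds 0) := by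
    apply tendsto_zero_of_even_odd
    · have h1 : Tendsto (fun k : ℕ => (2:ℝ) * ((k:ℝ) * rowGap a (ipfp a b X0 (2*k)) ^ 2))
          atTop (nhds 0) := by simpa using hkRG.const_mul (2:ℝ)
      have h2 := h1.sqrt
      rw [Real.sqrt_zero] at h2
      refine h2.congr fun k => ?_
      rw [show (2:ℝ) * ((k:ℝ) * rowGap a (ipfp a b X0 (2*k)) ^ 2)
          = ((2*k : ℕ):ℝ) * rowGap a (ipfp a b X0 (2*k)) ^ 2 from by push_cast; ring,
        Real.sqrt_mul (by positivity) _, Real.sqrt_sq rowGap_nonneg]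
    · have heq : (fun k : ℕ => Real.sqrt ((2*k+1 : ℕ):ℝ) * rowGap a (ipfp a b X0 (2*k+1)))
          = fun _ => (0:ℝ) := by
        funext k; rw [hrg_odd k, mul_zero]
      rw [heq]
      exact tendsto_const_nhds
  have hv : Tendsto (fun n : ℕ => Real.sqrt (n:ℝ) * colGap b (ipfp a b X0 n))
      atTop (nhds 0) := by
    apply tendsto_zero_of_even_odd
    · have heq : (fun k : ℕ => Real.sqrt ((2*k : ℕ):ℝ) * colGap b (ipfp a b X0 (2*k)))
          =ᶠ[atTop] fun _ => (0:ℝ) := by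
        filter_upwards [eventually_ge_atTop 1] with k hk
        obtain ⟨m, rfl⟩ : ∃ m, k = m + 1 := ⟨k - 1, by omega⟩
        rw [show 2*(m+1) = 2*m+2 from by ring, hcg_even m, mul_zero]
      exact (tendsto_congr' heq).2 tendsto_const_nhds
    · have h1 : Tendsto (fun k : ℕ => (2:ℝ) * ((k:ℝ) * colGap b (ipfp a b X0 (2*k+1)) ^ 2)
          + colGap b (ipfp a b X0 (2*k+1)) ^ 2) atTop (nhds 0) := by
        simpa using (hkCG.const_mul (2:ℝ)).add hCG0
      have h2 := h1.sqrt
      rw [Real.sqrt_zero] at h2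
      refine h2.congr fun k => ?_
      rw [show (2:ℝ) * ((k:ℝ) * colGap b (ipfp a b X0 (2*k+1)) ^ 2)
            + colGap b (ipfp a b X0 (2*k+1)) ^ 2
          = ((2*k+1 : ℕ):ℝ) * colGap b (ipfp a b X0 (2*k+1)) ^ 2 from by push_cast; ring,
        Real.sqrt_mul (by positivity) _, Real.sqrt_sq colGap_nonneg]
  -- final conclusions
  have concR3 : ∀ i, Tendsto (fun n : ℕ => Real.sqrt (n:ℝ) * (Rrat a (ipfp a b X0 n) i - 1))
      atTop (nhds 0) := by
    intro i
    apply squeeze_zero_norm (a := fun n : ℕ => Real.sqrt (n:ℝ) * rowGap a (ipfp a b X0 n) / a i)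
    · intro n
      rw [Real.norm_eq_abs, abs_mul, abs_of_nonneg (Real.sqrt_nonneg _), mul_div_assoc]
      exact mul_le_mul_of_nonneg_left (abs_Rrat_sub_one_le ha i) (Real.sqrt_nonneg _)
    · simpa using hw.div_const (a i)
  have concC3 : ∀ j, Tendsto (fun n : ℕ => Real.sqrt (n:ℝ) * (Crat b (ipfp a b X0 n) j - 1))
      atTop (nhds 0) := by
    intro j
    apply squeeze_zero_norm (a := fun n : ℕ => Real.sqrt (n:ℝ) * colGap b (ipfp a b X0 n) / b j)
    · intro n
      rw [Real.norm_eq_abs, abs_mul, abs_of_nonneg (Real.sqrt_nonneg _), mul_div_assoc]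
      exact mul_le_mul_of_nonneg_left (abs_Crat_sub_one_le hb j) (Real.sqrt_nonneg _)
    · simpa using hv.div_const (b j)
  have concR5 : ∀ i, Tendsto (fun n => Rrat a (ipfp a b X0 n) i) atTop (nhds 1) := by
    intro i
    have h1 : Tendsto (fun n : ℕ => Rrat a (ipfp a b X0 n) i - 1) atTop (nhds 0) := by
      apply squeeze_zero_norm'
        (a := fun n : ℕ => Real.sqrt (n:ℝ) * rowGap a (ipfp a b X0 n) / a i)
      · filter_upwards [eventually_ge_atTop 1] with n hn
        have hs1 : (1:ℝ) ≤ Real.sqrt (n:ℝ) := by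
          rw [show (1:ℝ) = Real.sqrt 1 from Real.sqrt_one.symm]
          exact Real.sqrt_le_sqrt (by exact_mod_cast hn)
        calc ‖Rrat a (ipfp a b X0 n) i - 1‖ = |Rrat a (ipfp a b X0 n) i - 1| :=
              Real.norm_eq_abs _
          _ ≤ rowGap a (ipfp a b X0 n) / a i := abs_Rrat_sub_one_le ha i
          _ ≤ Real.sqrt (n:ℝ) * rowGap a (ipfp a b X0 n) / a i := by
              gcongr
              · exact (ha i).le
              · exact le_mul_of_one_le_left rowGap_nonneg hs1
      · simpa using hw.div_const (a i)
    have h2 := h1.add_const 1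
    simpa using h2
  have concC5 : ∀ j, Tendsto (fun n => Crat b (ipfp a b X0 n) j) atTop (nhds 1) := by
    intro j
    have h1 : Tendsto (fun n : ℕ => Crat b (ipfp a b X0 n) j - 1) atTop (nhds 0) := by
      apply squeeze_zero_norm'
        (a := fun n : ℕ => Real.sqrt (n:ℝ) * colGap b (ipfp a b X0 n) / b j)
      · filter_upwards [eventually_ge_atTop 1] with n hn
        have hs1 : (1:ℝ) ≤ Real.sqrt (n:ℝ) := by
          rw [show (1:ℝ) = Real.sqrt 1 from Real.sqrt_one.symm]
          exact Real.sqrt_le_sqrt (by exact_mod_cast hn)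
        calc ‖Crat b (ipfp a b X0 n) j - 1‖ = |Crat b (ipfp a b X0 n) j - 1| :=
              Real.norm_eq_abs _
          _ ≤ colGap b (ipfp a b X0 n) / b j := abs_Crat_sub_one_le hb j
          _ ≤ Real.sqrt (n:ℝ) * colGap b (ipfp a b X0 n) / b j := by
              gcongr
              · exact (hb j).le
              · exact le_mul_of_one_le_left colGap_nonneg hs1
      · simpa using hv.div_const (b j)
    have h2 := h1.add_const 1
    simpa using h2
  exact ⟨conc1, conc2, concR3, concC3, concR5, concC5⟩
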